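/- arXiv:2105.06763 — 3 statements merged into one kernel-verified Lean document; each statement's English description precedes it below -/
import Mathlib

section
/- A strategy profile a = (a₁,…,aₙ) belongs to the Nash product of argmax selection functions applied to the utility costate, i.e. a ∈ (⊠_{p} argmax_{A_p})(u), if and only if a is a Nash equilibrium of the normal-form game (A, u): for every player p and every a'_p ∈ A_p, u_p(a) ≥ u_p(a[p ← a'_p]). -/
/-- Multivalued selection functions over `(X, S)`. -/
def Sel (X S : Type) : Type := (X → S) → Set X

/-- `argmax` as a selection function. -/
def argmaxSel {A : Type} : Sel A ℝ := fun k => {x | ∀ x', k x' ≤ k x}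

/-- The `n`-fold Nash product of a family of selection functions. -/
def bigNash {P : Type} [DecidableEq P] {Ω C : P → Type} (ε : ∀ p, Sel (Ω p) (C p)) :
    Sel (∀ p, Ω p) (∀ p, C p) :=
  fun k => {ω | ∀ p, ω p ∈ ε p (fun x => k (Function.update ω p x) p)}

/-- a strategy profile belongs to the Nash product of `argmax`
selection functions applied to the utility costate iff it is a Nash equilibrium
of the normal-form game. -/
theorem nash_product_argmax_iff_nash {n : ℕ} (A : Fin n → Type)
    [∀ p, Fintype (A p)] [∀ p, Nonempty (A p)]
    (u : (∀ p, A p) → Fin n → ℝ) (a : ∀ p, A p) :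
    a ∈ bigNash (fun _ : Fin n => argmaxSel) u ↔
      ∀ (p : Fin n) (a' : A p), u (Function.update a p a') p ≤ u a p := by
  simp [bigNash, argmaxSel, Set.mem_setOf_eq, Function.update_eq_self]
end

section
/- Let T be a perfect-information extensive form game with players P and real rewards, and let G_T be the open game with arena PETtoArena(T) and selection function ⊠_{p∈P} argmax over strategies(T,p). Then the set of equilibria of G_T for the context (•, payoff_PET T) equals the set of Nash equilibria of T. -/
/-- A lens from `(X,S)` to `(Y,R)`: a `get` and a `put`. -/
structure Lens (X S Y R : Type) where
  get : X → Y
  put : X × R → S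

/-- Sequential composition of lenses. -/
def Lens.comp {X S Y R Z T : Type} (L : Lens X S Y R) (M : Lens Y R Z T) :
    Lens X S Z T where
  get x := M.get (L.get x)
  put := fun (x, t) => L.put (x, M.put (L.get x, t))

/-- The identity lens `(id, π₂)`. -/
def Lens.idLens (X S : Type) : Lens X S X S where
  get := id
  put := Prod.snd
/-- Perfect-information extensive form game trees over players `P` and rewards `R`. -/
inductive PETree (P R : Type) : Type
  | leaf : (P → R) → PETree P R
  | node : P → (n : ℕ+) → (Fin n → PETree P R) → PETree P R

/-- The set of strategies of player `p` in a tree. -/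
def PETree.strategies {P R : Type} [DecidableEq P] : PETree P R → P → Type
  | .leaf _, _ => PUnit
  | .node q n f, p => (if p = q then Fin n else PUnit) × ∀ m : Fin n, (f m).strategies p

/-- The set of game trajectories (paths) of a tree. -/
def PETree.paths {P R : Type} : PETree P R → Type
  | .leaf _ => PUnit
  | .node _ n f => Σ m : Fin n, (f m).paths

/-- The payoff vector determined by a trajectory. -/
def PETree.payoff {P R : Type} : (T : PETree P R) → T.paths → P → R
  | .leaf v, _ => v
  | .node _ _ f, ⟨m, π⟩ => (f m).payoff π

/-- Playing a strategy profile yields a trajectory. -/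
def PETree.play {P R : Type} [DecidableEq P] :
    (T : PETree P R) → (∀ p, T.strategies p) → T.paths
  | .leaf _, _ => PUnit.unit
  | .node q n f, ω =>
    let m : Fin n := cast (if_pos rfl) (ω q).1
    ⟨m, (f m).play (fun p => (ω p).2 m)⟩

/-- Nash equilibrium: no player can improve by unilaterally changing strategy. -/
def PETree.IsNash {P R : Type} [DecidableEq P] [Preorder R]
    (T : PETree P R) (ω : ∀ p, T.strategies p) : Prop :=
  ∀ (p : P) (s : T.strategies p),
    T.payoff (T.play (Function.update ω p s)) p ≤ T.payoff (T.play ω) p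
/-- The inductive translation of a perfect-information game tree to an arena:
a parametrised lens with parameters (strategy profiles, reward vectors),
trivial states, moves the paths of the tree, and utilities `P → ℝ`. -/
def PETtoArena {P : Type} [DecidableEq P] :
    (T : PETree P ℝ) →
      Lens ((∀ p, T.strategies p) × Unit) ((P → ℝ) × (P → ℝ)) T.paths (P → ℝ)
  | .leaf _ =>
    { get := fun _ => PUnit.unit
      put := fun (_, r) => (r, r) }
  | .node q n f =>
    { get := fun (ω, _) =>
        let m : Fin n := cast (if_pos rfl) (ω q).1
        ⟨m, (PETtoArena (f m)).get ((fun p => (ω p).2 m), ())⟩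
      put := fun ((ω, _), r) =>
        let m : Fin n := cast (if_pos rfl) (ω q).1
        (PETtoArena (f m)).put (((fun p => (ω p).2 m), ()), r) }

/-- The equilibria of the open game with arena `PETtoArena T` and selection
function the Nash product of `argmax`, for the context `(•, payoff_PET T)`:
the Nash-product selection function applied to the costate sending a strategy
profile to the reward vector obtained by playing it in the arena from the
trivial state and evaluating the continuation `payoff_PET T`. -/
def gameEquilibria {P : Type} [DecidableEq P] (T : PETree P ℝ) :
    Set (∀ p, T.strategies p) :=
  bigNash (fun _ : P => argmaxSel)
    (fun ω => ((PETtoArena T).put ((ω, ()),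
      T.payoff ((PETtoArena T).get (ω, ())))).1)

lemma PETtoArena_put {P : Type} [DecidableEq P] :
    ∀ (T : PETree P ℝ) (ω : ∀ p, T.strategies p) (r : P → ℝ),
      (PETtoArena T).put ((ω, ()), r) = (r, r)
  | .leaf _, _, _ => rfl
  | .node q n f, ω, r => by
    simp only [PETtoArena]
    exact PETtoArena_put (f _) _ r

lemma PETtoArena_get {P : Type} [DecidableEq P] :
    ∀ (T : PETree P ℝ) (ω : ∀ p, T.strategies p),
      (PETtoArena T).get (ω, ()) = T.play ω
  | .leaf _, _ => rfl
  | .node q n f, ω => by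
    simp only [PETtoArena, PETree.play]
    exact congrArg _ (PETtoArena_get (f _) _)

/-- the equilibria of the translated open game for the context
`(•, payoff_PET T)` coincide with the Nash equilibria of `T`. -/
theorem gameEquilibria_eq_nash {P : Type} [DecidableEq P] (T : PETree P ℝ) :
    gameEquilibria T = {ω | T.IsNash ω} := by
  ext ω
  simp only [gameEquilibria, bigNash, argmaxSel, PETtoArena_get, PETtoArena_put,
    Set.mem_setOf_eq, PETree.IsNash]
  constructor
  · intro h p s
    have := h p s
    rwa [Function.update_eq_self] at this
  · intro h p s
    rw [Function.update_eq_self]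
    exact h p s
end

section
/- Let T be an imperfect-information extensive form game with players P, real rewards, and information sets (I, belongs, n). Let G_T be the open game whose arena is the reparametrisation of PETtoArena(IETtoPET T) along the clone lens, and whose selection function is ⊠_{p∈P} argmax over the imperfect-information strategy sets. Then the equilibria of G_T for the context (•, payoff T) coincide with the Nash equilibria of T. -/
/-- Reparametrisation of a parametrised lens along a lens `w : (P',Q') → (P,Q)`,
i.e. `w^* L = (w ⊗ id) ⨟ L`. -/
def Lens.reparam {P Q P' Q' X S Y R : Type}
    (w : Lens P' Q' P Q) (L : Lens (P × X) (Q × S) Y R) :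
    Lens (P' × X) (Q' × S) Y R where
  get := fun (p', x) => L.get (w.get p', x)
  put := fun ((p', x), r) =>
    let qs := L.put ((w.get p', x), r)
    (w.put (p', qs.1), qs.2)
/-- Imperfect-information extensive form game trees, with information sets `I`
of arities `n`. -/
inductive IETree (P R I : Type) (n : I → ℕ+) : Type
  | leaf : (P → R) → IETree P R I n
  | node : (i : I) → (Fin (n i) → IETree P R I n) → IETree P R I n

/-- The forgetful translation to perfect-information trees. -/
def IETtoPET {P R I : Type} {n : I → ℕ+} (belongs : I → P) :
    IETree P R I n → PETree P R
  | .leaf v => .leaf v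
  | .node i f => .node (belongs i) (n i) (fun m => IETtoPET belongs (f m))

/-- Paths of an imperfect-information tree. -/
def IETree.pathsIET {P R I : Type} {n : I → ℕ+} : IETree P R I n → Type
  | .leaf _ => PUnit
  | .node i f => Σ m : Fin (n i), (f m).pathsIET

/-- Payoff of a path in an imperfect-information tree. -/
def IETree.payoffIET {P R I : Type} {n : I → ℕ+} :
    (T : IETree P R I n) → T.pathsIET → P → R
  | .leaf v, _ => v
  | .node _ f, ⟨m, π⟩ => (f m).payoffIET π

/-- Playing an imperfect-information strategy profile (a move for every
information set): each node plays the move assigned to its information set. -/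
def IETree.playIET {P R I : Type} {n : I → ℕ+} :
    (T : IETree P R I n) → ((i : I) → Fin (n i)) → T.pathsIET
  | .leaf _, _ => PUnit.unit
  | .node i f, s => ⟨s i, (f (s i)).playIET s⟩

/-- The "get" of the clone lens: the perfect-information strategy profile
playing the move `s i` at every node labelled `i`. -/
def cloneGet {P R I : Type} [DecidableEq P] {n : I → ℕ+} (belongs : I → P) :
    (T : IETree P R I n) → ((i : I) → Fin (n i)) →
      ∀ p, (IETtoPET belongs T).strategies p
  | .leaf _, _, _ => PUnit.unit
  | .node i f, s, p =>
    (if h : p = belongs i then cast (if_pos h).symm (s i)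
      else cast (if_neg h).symm PUnit.unit,
     fun m => cloneGet belongs (f m) s p)

/-- The imperfect-information strategies of player `p`: a move for each
information set belonging to `p`. -/
def IETStrategies {P I : Type} (belongs : I → P) (n : I → ℕ+) (p : P) : Type :=
  (j : {i : I // belongs i = p}) → Fin (n j.1)

/-- Assembling a strategy for each player into a move for every information set. -/
def toProfile {P I : Type} {belongs : I → P} {n : I → ℕ+}
    (ω : ∀ p, IETStrategies belongs n p) : (i : I) → Fin (n i) :=
  fun i => ω (belongs i) ⟨i, rfl⟩

/-- Nash equilibria of an imperfect-information game. -/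
def IETree.IsNashIET {P I : Type} [DecidableEq P] {n : I → ℕ+}
    (belongs : I → P) (T : IETree P ℝ I n)
    (ω : ∀ p, IETStrategies belongs n p) : Prop :=
  ∀ (p : P) (s : IETStrategies belongs n p),
    T.payoffIET (T.playIET (toProfile (Function.update ω p s))) p ≤
      T.payoffIET (T.playIET (toProfile ω)) p

/-- The clone lens: its get clones an imperfect-information strategy profile
to the perfect-information profile playing the same move at all nodes of each
information set, and its put carries rewards through unchanged. -/
def cloneLens {P I : Type} [DecidableEq P] {n : I → ℕ+}
    (belongs : I → P) (T : IETree P ℝ I n) :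
    Lens (∀ p, IETStrategies belongs n p) (P → ℝ)
      (∀ p, (IETtoPET belongs T).strategies p) (P → ℝ) where
  get ω := cloneGet belongs T (toProfile ω)
  put := Prod.snd

/-- The arena of the imperfect-information open game: `PETtoArena (IETtoPET T)`
reparametrised along the clone lens. -/
def IETArena {P I : Type} [DecidableEq P] {n : I → ℕ+}
    (belongs : I → P) (T : IETree P ℝ I n) :
    Lens ((∀ p, IETStrategies belongs n p) × Unit) ((P → ℝ) × (P → ℝ))
      (IETtoPET belongs T).paths (P → ℝ) :=
  Lens.reparam (cloneLens belongs T) (PETtoArena (IETtoPET belongs T))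

/-- The equilibria of the imperfect-information open game, for the context
`(•, payoff T)`: the Nash product of `argmax` applied to the costate sending a
strategy profile to the reward vector from playing it in the arena. -/
def IETEquilibria {P I : Type} [DecidableEq P] {n : I → ℕ+}
    (belongs : I → P) (T : IETree P ℝ I n) :
    Set (∀ p, IETStrategies belongs n p) :=
  bigNash (fun _ : P => argmaxSel)
    (fun ω => ((IETArena belongs T).put ((ω, ()),
      (IETtoPET belongs T).payoff ((IETArena belongs T).get (ω, ())))).1)

lemma PETtoArena_put_eq {P : Type} [DecidableEq P] (T : PETree P ℝ)
    (σ : ∀ p, T.strategies p) (r : P → ℝ) :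
    (PETtoArena T).put ((σ, ()), r) = (r, r) := by
  induction T with
  | leaf v => rfl
  | node q m f ih => exact ih _ _

lemma PETtoArena_get_eq {P : Type} [DecidableEq P] (T : PETree P ℝ)
    (σ : ∀ p, T.strategies p) :
    (PETtoArena T).get (σ, ()) = T.play σ := by
  induction T with
  | leaf v => rfl
  | node q m f ih => exact congrArg _ (ih _ _)

lemma payoff_play_cloneGet {P R I : Type} [DecidableEq P] {n : I → ℕ+}
    (belongs : I → P) (T : IETree P R I n) (s : (i : I) → Fin (n i)) :
    (IETtoPET belongs T).payoff ((IETtoPET belongs T).play (cloneGet belongs T s)) =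
      T.payoffIET (T.playIET s) := by
  induction T with
  | leaf v => rfl
  | node i f ih =>
    have hm : (cast (if_pos rfl) (cloneGet belongs (IETree.node i f) s (belongs i)).1
        : Fin (n i)) = s i := by
      simp [cloneGet]
    show (IETtoPET belongs (f _)).payoff _ = (f (s i)).payoffIET ((f (s i)).playIET s)
    rw [show (fun p => (cloneGet belongs (IETree.node i f) s p).2
        (cast (if_pos rfl) (cloneGet belongs (IETree.node i f) s (belongs i)).1)) =
        cloneGet belongs (f (cast (if_pos rfl)
          (cloneGet belongs (IETree.node i f) s (belongs i)).1)) s from rfl]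
    rw [hm] at *
    exact ih _

lemma costate_eq {P I : Type} [DecidableEq P] {n : I → ℕ+}
    (belongs : I → P) (T : IETree P ℝ I n) (ω : ∀ p, IETStrategies belongs n p) :
    ((IETArena belongs T).put ((ω, ()),
      (IETtoPET belongs T).payoff ((IETArena belongs T).get (ω, ())))).1 =
      T.payoffIET (T.playIET (toProfile ω)) := by
  rw [show (IETArena belongs T).get (ω, ()) =
      (IETtoPET belongs T).play (cloneGet belongs T (toProfile ω)) from
    PETtoArena_get_eq _ _]
  show ((PETtoArena (IETtoPET belongs T)).put ((cloneGet belongs T (toProfile ω), ()), _)).1 = _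
  rw [PETtoArena_put_eq]
  exact payoff_play_cloneGet belongs T (toProfile ω)

lemma toProfile_update {P I : Type} [DecidableEq P] {belongs : I → P} {n : I → ℕ+}
    (ω : ∀ p, IETStrategies belongs n p) (p : P) :
    toProfile (Function.update ω p (ω p)) = toProfile ω := by
  rw [Function.update_eq_self]

/-- the equilibria of the translated imperfect-information open
game for the context `(•, payoff T)` coincide with the Nash equilibria of `T`. -/
theorem IETEquilibria_eq_nash {P I : Type} [DecidableEq P] {n : I → ℕ+}
    (belongs : I → P) (T : IETree P ℝ I n) :
    IETEquilibria belongs T = {ω | T.IsNashIET belongs ω} := by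
  ext ω
  simp only [IETEquilibria, bigNash, argmaxSel, Set.mem_setOf_eq, IETree.IsNashIET,
    costate_eq, Function.update_eq_self]
end
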